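/- Let Y be a Banach space with dual Y′, let K ⊆ Y be a nonempty convex set, and let x* ∈ K. Let G : Y → 2^{Y′} be a nonempty-valued correspondence which, for each y ∈ K, is lower semicontinuous from the relative topology of the segment L = {λy + (1−λ)x* : λ ∈ [0,1]} into the weak*-topology σ(Y′,Y). Let f : Y → ℝ ∪ {−∞,+∞} be concave with f(x*) = 0. If sup_{u ∈ G(z)} [Re⟨u, x* − z⟩ + f(z)] ≤ 0 for every z ∈ K, then sup_{u ∈ G(x*)} [Re⟨u, x* − y⟩ + f(y)] ≤ 0 for every y ∈ K. -/

import Mathlib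

/-- Lower semicontinuity of a correspondence on a subset `L` of `Z`
(with respect to the relative topology of `L`). -/
def LowerSemicontinuousCorrOn {Z Y : Type*} [TopologicalSpace Z] [TopologicalSpace Y]
    (P : Z → Set Y) (L : Set Z) : Prop :=
  ∀ z ∈ L, ∀ V : Set Y, IsOpen V → (P z ∩ V).Nonempty →
    ∃ U : Set Z, IsOpen U ∧ z ∈ U ∧ ∀ u ∈ U ∩ L, (P u ∩ V).Nonempty

/-!
Along the segment from `x*` to `y`, the points `z = l • y + (1 - l) • x*` with `0 < l ≤ 1`
satisfy `x* - z = l • (x* - y)` and, by concavity, `l * f y ≤ f z`; the hypothesis at `z` divided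
by `l` therefore says that every `u ∈ G z` lies in the weak*-closed set
`{u | u (x* - y) + f y ≤ 0}`. Lower semicontinuity of `G` along the segment lets this closed
condition pass to the limit `l → 0`, i.e. to `G x*`.
-/

open Set

theorem LowerSemicontinuousCorrOn.subset_of_mem_closure {Z Y : Type*} [TopologicalSpace Z]
    [TopologicalSpace Y] {P : Z → Set Y} {L S : Set Z} {C : Set Y}
    (hP : LowerSemicontinuousCorrOn P L) (hSL : S ⊆ L) (hC : IsClosed C)
    (hSC : ∀ w ∈ S, P w ⊆ C) {z : Z} (hzL : z ∈ L) (hzS : z ∈ closure S) : P z ⊆ C := by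
  intro p hp
  by_contra hpC
  obtain ⟨U, hU, hzU, hUP⟩ := hP z hzL Cᶜ hC.isOpen_compl ⟨p, hp, hpC⟩
  obtain ⟨w, hwU, hwS⟩ := mem_closure_iff.mp hzS U hU hzU
  obtain ⟨q, hqP, hqC⟩ := hUP w ⟨hwU, hSL hwS⟩
  exact hqC (hSC w hwS hqP)

theorem EReal.coe_add_nonpos_of_mul {l : ℝ} (hl : 0 < l) {a : ℝ} {b : EReal}
    (h : ((l * a : ℝ) : EReal) + l * b ≤ 0) : (a : EReal) + b ≤ 0 := by
  rw [EReal.coe_mul, ← EReal.left_distrib_of_nonneg_of_ne_top (by exact_mod_cast hl.le)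
    (EReal.coe_ne_top l), EReal.mul_nonpos_iff] at h
  rcases h with ⟨-, h⟩ | ⟨hl', -⟩
  · exact h
  · exact absurd (EReal.coe_nonpos.mp hl') hl.not_ge

theorem EReal.continuous_coe_add (b : EReal) : Continuous fun t : ℝ => (t : EReal) + b :=
  continuous_iff_continuousAt.mpr fun t =>
    (EReal.continuousAt_add (Or.inl (EReal.coe_ne_top t)) (Or.inl (EReal.coe_ne_bot t))).comp
      (continuous_coe_real_ereal.prodMk continuous_const).continuousAt

theorem isClosed_setOf_coe_apply_add_nonpos {Y : Type*} [AddCommMonoid Y] [Module ℝ Y]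
    [TopologicalSpace Y] (v : Y) (b : EReal) :
    IsClosed {u : WeakDual ℝ Y | ((u v : ℝ) : EReal) + b ≤ 0} :=
  isClosed_le ((EReal.continuous_coe_add b).comp (WeakDual.eval_continuous v)) continuous_const

theorem mem_closure_smul_add_one_sub_smul_image_Ioc {Y : Type*} [AddCommGroup Y] [Module ℝ Y]
    [TopologicalSpace Y] [IsTopologicalAddGroup Y] [ContinuousSMul ℝ Y] (x y : Y) :
    x ∈ closure ((fun l : ℝ => l • y + (1 - l) • x) '' Ioc 0 1) := by
  have hcont : Continuous fun l : ℝ => l • y + (1 - l) • x := by fun_prop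
  simpa using map_mem_closure hcont (by simp : (0 : ℝ) ∈ closure (Ioc 0 1)) (mapsTo_image _ _)

theorem smul_add_one_sub_smul_image_Ioc_subset_segment {Y : Type*} [AddCommGroup Y] [Module ℝ Y]
    (x y : Y) : (fun l : ℝ => l • y + (1 - l) • x) '' Ioc 0 1 ⊆ segment ℝ y x := by
  rintro _ ⟨l, ⟨hl0, hl1⟩, rfl⟩
  exact ⟨l, 1 - l, hl0.le, by linarith, by ring, rfl⟩

theorem minty_argument_general
    {Y : Type*} [NormedAddCommGroup Y] [NormedSpace ℝ Y]
    (K : Set Y) (hK_cv : Convex ℝ K)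
    (xs : Y) (hxs : xs ∈ K)
    (G : Y → Set (WeakDual ℝ Y))
    (hG_lsc : ∀ y ∈ K, LowerSemicontinuousCorrOn G (segment ℝ y xs))
    (f : Y → EReal)
    (hf_cc : ∀ y₁ y₂ : Y, ∀ l : ℝ, 0 ≤ l → l ≤ 1 →
      (l : EReal) * f y₁ + ((1 - l : ℝ) : EReal) * f y₂ ≤ f (l • y₁ + (1 - l) • y₂))
    (hf_zero : f xs = 0)
    (hsup : ∀ z ∈ K, (⨆ u ∈ G z, ((u (xs - z) : ℝ) : EReal) + f z) ≤ 0) :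
    ∀ y ∈ K, (⨆ u ∈ G xs, ((u (xs - y) : ℝ) : EReal) + f y) ≤ 0 := by
  intro y hy
  have hnear : ∀ z ∈ (fun l : ℝ => l • y + (1 - l) • xs) '' Ioc 0 1,
      G z ⊆ {u : WeakDual ℝ Y | ((u (xs - y) : ℝ) : EReal) + f y ≤ 0} := by
    rintro _ ⟨l, ⟨hl0, hl1⟩, rfl⟩ u hu
    have hconcave : (l : EReal) * f y ≤ f (l • y + (1 - l) • xs) := by
      simpa [hf_zero] using hf_cc y xs l hl0.le hl1
    have hdiff : xs - (l • y + (1 - l) • xs) = l • (xs - y) := by module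
    have hz := (le_iSup₂_of_le u hu le_rfl).trans
      (hsup _ (hK_cv hy hxs hl0.le (by linarith) (by ring)))
    rw [hdiff, map_smul, smul_eq_mul] at hz
    exact EReal.coe_add_nonpos_of_mul hl0 ((add_le_add_right hconcave _).trans hz)
  exact iSup₂_le ((hG_lsc y hy).subset_of_mem_closure
    (smul_add_one_sub_smul_image_Ioc_subset_segment xs y)
    (isClosed_setOf_coe_apply_add_nonpos _ _) hnear (right_mem_segment ℝ y xs)
    (mem_closure_smul_add_one_sub_smul_image_Ioc xs y))

/-- The Minty-type argument used in the proof of Theorem 6 of the paper. -/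
theorem minty_argument
    {Y : Type*} [NormedAddCommGroup Y] [NormedSpace ℝ Y] [CompleteSpace Y]
    (K : Set Y) (hK_ne : K.Nonempty) (hK_cv : Convex ℝ K)
    (xs : Y) (hxs : xs ∈ K)
    (G : Y → Set (WeakDual ℝ Y)) (hG_ne : ∀ y : Y, (G y).Nonempty)
    (hG_lsc : ∀ y ∈ K, LowerSemicontinuousCorrOn G (segment ℝ y xs))
    (f : Y → EReal)
    (hf_cc : ∀ y₁ y₂ : Y, ∀ l : ℝ, 0 ≤ l → l ≤ 1 →
      (l : EReal) * f y₁ + ((1 - l : ℝ) : EReal) * f y₂ ≤ f (l • y₁ + (1 - l) • y₂))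
    (hf_zero : f xs = 0)
    (hsup : ∀ z ∈ K, (⨆ u ∈ G z, ((u (xs - z) : ℝ) : EReal) + f z) ≤ 0) :
    ∀ y ∈ K, (⨆ u ∈ G xs, ((u (xs - y) : ℝ) : EReal) + f y) ≤ 0 :=
  minty_argument_general K hK_cv xs hxs G hG_lsc f hf_cc hf_zero hsup
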